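/- arXiv:1303.2547 — 6 statements merged into one kernel-verified Lean document; each statement's English description precedes it below -/
import Mathlib

section
/- For m ≥ 4, the only codewords of weight m − 1 in the dual code C^(m)⊥ (the row space of H_m over F_2) are exactly the m rows of H_m. -/
open Finset

/-- Coordinate positions of `C^(m)`: the 2-element subsets of `{1,…,m}`. -/
abbrev Coords (m : ℕ) := {s : Finset (Fin m) // s.card = 2}

/-- The parity check matrix `H_m`, whose columns are all weight-2 vectors of length `m`. -/
def Hmat (m : ℕ) (i : Fin m) (c : Coords m) : ZMod 2 := if i ∈ c.1 then 1 else 0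

/-- The code `C^(m)`: the kernel of `H_m` over `F_2`. -/
noncomputable def Cm (m : ℕ) : Submodule (ZMod 2) (Coords m → ZMod 2) :=
  LinearMap.ker (Matrix.mulVecLin (Matrix.of fun i c => Hmat m i c))

/-- The distance from a vector `x` to a code `C`. -/
noncomputable def distToCode {ι : Type*} [Fintype ι]
    (C : Set (ι → ZMod 2)) (x : ι → ZMod 2) : ℕ :=
  sInf {d | ∃ c ∈ C, hammingDist x c = d}

/-- The covering radius of a code `C`. -/
noncomputable def covRad {ι : Type*} [Fintype ι] (C : Set (ι → ZMod 2)) : ℕ :=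
  sSup {d | ∃ x, distToCode C x = d}

/-- `C(i)`, the set of vectors at distance exactly `i` from `C`. -/
noncomputable def Cset {ι : Type*} [Fintype ι] (C : Set (ι → ZMod 2)) (i : ℕ) :
    Set (ι → ZMod 2) := {x | distToCode C x = i}

/-- The coset `x + C`. -/
def cosetOf {ι : Type*} (C : Set (ι → ZMod 2)) (x : ι → ZMod 2) : Set (ι → ZMod 2) :=
  (fun c => x + c) '' C

/-- The weight of the coset `x + C`: the minimum Hamming weight of its elements. -/
noncomputable def cosetWt {ι : Type*} [Fintype ι] (C : Set (ι → ZMod 2)) (x : ι → ZMod 2) : ℕ :=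
  sInf {w | ∃ v ∈ cosetOf C x, hammingNorm v = w}

/-- Complete regularity of a code `C` with covering radius `ρ` and
intersection numbers `b i`, `c i`. -/
noncomputable def compRegular {ι : Type*} [Fintype ι] (C : Set (ι → ZMod 2)) (ρ : ℕ)
    (b c : ℕ → ℕ) : Prop :=
  (∀ i, 1 ≤ i → i ≤ ρ → ∀ x ∈ Cset C i,
      Nat.card {y | hammingDist x y = 1 ∧ y ∈ Cset C (i - 1)} = c i) ∧
  (∀ i, i < ρ → ∀ x ∈ Cset C i,
      Nat.card {y | hammingDist x y = 1 ∧ y ∈ Cset C (i + 1)} = b i)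

/-- The action of a coordinate permutation on vectors. -/
def permAct {ι : Type*} (π : Equiv.Perm ι) (v : ι → ZMod 2) : ι → ZMod 2 := v ∘ π

/-- The automorphism group of a code, as a set of coordinate permutations. -/
def autSet {ι : Type*} (C : Set (ι → ZMod 2)) : Set (Equiv.Perm ι) :=
  {π | ∀ v, permAct π v ∈ C ↔ v ∈ C}

/-- Complete transitivity: any two cosets of the same weight are related by
an automorphism of the code. -/
noncomputable def compTrans {ι : Type*} [Fintype ι] (C : Set (ι → ZMod 2)) : Prop :=
  ∀ x x', distToCode C x = distToCode C x' →
    ∃ π ∈ autSet C, permAct π '' cosetOf C x = cosetOf C x'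

/-! Over `𝔽₂` a codeword of the row space is the sum of the rows indexed by some
`T ⊆ Fin m`, and its coordinate at `{a, b}` is `#(T ∩ {a, b}) mod 2`. It is nonzero exactly when
the pair meets `T` once, so the weight is `#T * (m - #T)`, which equals `m - 1` only for `#T = 1`
or `#T = m - 1`. As every column has two ones, the rows sum to zero, so the sum of `m - 1` rows
is the remaining row. -/

section ZModTwo

variable {ι M : Type*} [AddCommGroup M] [Module (ZMod 2) M]

lemma exists_finset_sum_eq_of_mem_span_zmod_two [Fintype ι] {f : ι → M} {v : M}
    (hv : v ∈ Submodule.span (ZMod 2) (Set.range f)) :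
    ∃ T : Finset ι, ∑ i ∈ T, f i = v := by
  classical
  obtain ⟨c, rfl⟩ := (Submodule.mem_span_range_iff_exists_fun (ZMod 2)).mp hv
  refine ⟨({i | c i = 1} : Finset ι), ?_⟩
  rw [sum_filter]
  refine sum_congr rfl fun i _ => ?_
  rcases (by decide : ∀ x : ZMod 2, x = 0 ∨ x = 1) (c i) with h | h <;> simp [h]

lemma sum_compl_eq_sum_of_sum_eq_zero [Fintype ι] [DecidableEq ι] {f : ι → M}
    (hf : ∑ i, f i = 0) (T : Finset ι) : ∑ i ∈ Tᶜ, f i = ∑ i ∈ T, f i := by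
  rw [← sum_add_sum_compl T f] at hf
  rw [← add_eq_zero_iff_neg_eq.mp hf, ZModModule.neg_eq_self]

end ZModTwo

section PairsMeetingOnce

variable {α : Type*} [DecidableEq α]

lemma card_inter_eq_one_iff_eq_pair {T s : Finset α} (hs : #s = 2) :
    #(T ∩ s) = 1 ↔ ∃ a ∈ T, ∃ b ∉ T, s = {a, b} := by
  refine ⟨fun h => ?_, ?_⟩
  · obtain ⟨x, y, hxy, rfl⟩ := card_eq_two.mp hs
    by_cases hx : x ∈ T <;> by_cases hy : y ∈ T
    · simp [inter_insert_of_mem hx, inter_singleton_of_mem hy, card_pair hxy] at h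
    · exact ⟨x, hx, y, hy, rfl⟩
    · exact ⟨y, hy, x, hx, pair_comm x y⟩
    · simp [inter_insert_of_notMem hx, inter_singleton_of_notMem hy] at h
  · rintro ⟨a, ha, b, hb, rfl⟩
    rw [inter_insert_of_mem ha, inter_singleton_of_notMem hb, insert_empty, card_singleton]

lemma eq_and_eq_of_pair_eq_pair {T : Finset α} {a b a' b' : α} (hb : b ∉ T) (ha' : a' ∈ T)
    (h : ({a, b} : Finset α) = {a', b'}) : a = a' ∧ b = b' := by
  have h₁ : a' ∈ ({a, b} : Finset α) := h ▸ mem_insert_self a' {b'}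
  have h₂ : b ∈ ({a', b'} : Finset α) := h ▸ mem_insert_of_mem (mem_singleton_self b)
  simp only [mem_insert, mem_singleton] at h₁ h₂
  grind

lemma card_pairs_inter_eq_one [Fintype α] (T : Finset α) :
    #{s : {s : Finset α // #s = 2} | #(T ∩ s.1) = 1} = #T * #Tᶜ := by
  rw [← card_product]
  symm
  refine card_bij (fun p hp => ⟨{p.1, p.2}, card_pair ?_⟩) ?_ ?_ ?_
  · rw [mem_product, mem_compl] at hp
    exact ne_of_mem_of_not_mem hp.1 hp.2
  · rintro ⟨a, b⟩ hp
    rw [mem_product, mem_compl] at hp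
    have hab : #({a, b} : Finset α) = 2 := card_pair (ne_of_mem_of_not_mem hp.1 hp.2)
    simpa using (card_inter_eq_one_iff_eq_pair hab).mpr ⟨a, hp.1, b, hp.2, rfl⟩
  · rintro ⟨a, b⟩ hp ⟨a', b'⟩ hp' h
    simp only [mem_product, mem_compl] at hp hp'
    obtain ⟨rfl, rfl⟩ := eq_and_eq_of_pair_eq_pair hp.2 hp'.1 (congrArg Subtype.val h)
    rfl
  · rintro ⟨s, hs⟩ h
    obtain ⟨a, ha, b, hb, rfl⟩ := (card_inter_eq_one_iff_eq_pair hs).mp (by simpa using h)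
    exact ⟨(a, b), by simp [ha, hb], rfl⟩

end PairsMeetingOnce

lemma Nat.eq_one_or_eq_sub_one_of_mul_sub_eq {t m : ℕ} (ht : t ≤ m) (h : t * (m - t) = m - 1) :
    t = 1 ∨ t = m - 1 := by
  obtain ⟨k, rfl⟩ := Nat.exists_eq_add_of_le ht
  rw [Nat.add_sub_cancel_left] at h
  rcases t with _ | t
  · omega
  rcases k with _ | k
  · omega
  have : t * k = 0 := by
    rw [show t + 1 + (k + 1) - 1 = t + k + 1 by omega] at h
    linarith
  rcases Nat.mul_eq_zero.mp this with rfl | rfl <;> omega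

section Hmat

variable (m : ℕ)

lemma sum_Hmat_apply (T : Finset (Fin m)) (c : Coords m) :
    (∑ i ∈ T, Hmat m i) c = #(T ∩ c.1) := by
  simp only [Finset.sum_apply, Hmat, sum_boole, filter_mem_eq_inter]

lemma sum_Hmat_apply_ne_zero_iff (T : Finset (Fin m)) (c : Coords m) :
    (∑ i ∈ T, Hmat m i) c ≠ 0 ↔ #(T ∩ c.1) = 1 := by
  have : #(T ∩ c.1) ≤ 2 := (card_le_card inter_subset_right).trans_eq c.2
  rw [sum_Hmat_apply, Ne, ZMod.natCast_eq_zero_iff]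
  omega

lemma hammingNorm_sum_Hmat (T : Finset (Fin m)) :
    hammingNorm (∑ i ∈ T, Hmat m i) = #T * (m - #T) := by
  simp only [hammingNorm, sum_Hmat_apply_ne_zero_iff, card_pairs_inter_eq_one, card_compl,
    Fintype.card_fin]

lemma sum_Hmat_eq_zero : ∑ i, Hmat m i = 0 := by
  funext c
  rw [sum_Hmat_apply, univ_inter, c.2]
  rfl

end Hmat

/-- for m ≥ 4, the only codewords of weight m-1 in the row space of H_m
are the rows of H_m. -/
theorem stmt_3 (m : ℕ) (hm : 4 ≤ m) (v : Coords m → ZMod 2)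
    (hv : v ∈ Submodule.span (ZMod 2) (Set.range (Hmat m))) :
    hammingNorm v = m - 1 ↔ v ∈ Set.range (Hmat m) := by
  obtain ⟨T, rfl⟩ := exists_finset_sum_eq_of_mem_span_zmod_two hv
  constructor
  · intro hw
    rw [hammingNorm_sum_Hmat] at hw
    have hT : #T ≤ m := (card_le_univ T).trans_eq (Fintype.card_fin m)
    rcases Nat.eq_one_or_eq_sub_one_of_mul_sub_eq hT hw with h | h
    · obtain ⟨i, rfl⟩ := card_eq_one.mp h
      exact ⟨i, (sum_singleton _ _).symm⟩
    · have hTc : #Tᶜ = 1 := by rw [card_compl, Fintype.card_fin]; omega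
      obtain ⟨j, hj⟩ := card_eq_one.mp hTc
      refine ⟨j, ?_⟩
      rw [← sum_compl_eq_sum_of_sum_eq_zero (sum_Hmat_eq_zero m), hj, sum_singleton]
  · rintro ⟨i, hi⟩
    rw [← hi, ← sum_singleton (Hmat m) i, hammingNorm_sum_Hmat, card_singleton, one_mul]
end

section
/- The covering radius of the code C^(m) equals ⌊m/2⌋ for all m ≥ 3. -/
/-!
Read `H_m` as the vertex-edge incidence matrix of the complete graph `K_m` over `F_2`: the
syndrome `H_m x` of an edge set `x` is its set of odd-degree vertices, which has even size.
Since every edge meets at most two vertices, reaching the syndrome `s` needs at least `|s| / 2`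
edges, and a perfect matching on `s` attains this. Hence the distance from `x` to `C^(m)` is
half the weight of its syndrome, which is at most `⌊m/2⌋`, with equality for any syndrome of
weight `2⌊m/2⌋`.
-/

open Finset

open Matrix

section HammingWeight

variable {ι κ : Type*} [Fintype ι] [Fintype κ]

lemma hammingDist_eq_hammingNorm_sub {R : Type*} [AddCommGroup R] [DecidableEq R] (x y : ι → R) :
    hammingDist x y = hammingNorm (x - y) := by
  rw [hammingDist_comm, hammingDist_eq_hammingNorm, neg_add_eq_sub]

lemma hammingNorm_add_le {R : Type*} [AddMonoid R] [DecidableEq R] (x y : ι → R) :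
    hammingNorm (x + y) ≤ hammingNorm x + hammingNorm y := by
  classical
  refine (card_le_card fun i hi => ?_).trans (card_union_le _ _)
  simp only [mem_filter_univ, mem_union, Pi.add_apply] at hi ⊢
  by_contra! h
  simp [h.1, h.2] at hi

lemma hammingNorm_single_le [DecidableEq ι] {R : Type*} [Zero R] [DecidableEq R] (i : ι) (a : R) :
    hammingNorm (Pi.single i a : ι → R) ≤ 1 := by
  refine (card_le_card fun j hj => ?_).trans (card_singleton i).le
  rw [mem_filter_univ] at hj
  rw [mem_singleton]
  by_contra h
  exact hj (by simp [h])

lemma hammingNorm_mulVec_le {R : Type*} [NonUnitalNonAssocSemiring R] [DecidableEq R]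
    (A : Matrix ι κ R) {k : ℕ} (hA : ∀ j, hammingNorm (A.col j) ≤ k) (x : κ → R) :
    hammingNorm (A *ᵥ x) ≤ k * hammingNorm x := by
  classical
  have hsupp : ({i | (A *ᵥ x) i ≠ 0} : Finset ι) ⊆
      ({j | x j ≠ 0} : Finset κ).biUnion fun j => {i | A i j ≠ 0} := by
    intro i hi
    rw [mem_filter_univ] at hi
    obtain ⟨j, -, hj⟩ := exists_ne_zero_of_sum_ne_zero hi
    simp only [mem_biUnion, mem_filter_univ]
    exact ⟨j, right_ne_zero_of_mul hj, left_ne_zero_of_mul hj⟩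
  calc hammingNorm (A *ᵥ x) ≤ _ := card_le_card hsupp
    _ ≤ ∑ j ∈ {j | x j ≠ 0}, hammingNorm (A.col j) := card_biUnion_le
    _ ≤ ∑ j ∈ {j | x j ≠ 0}, k := sum_le_sum fun j _ => hA j
    _ = k * hammingNorm x := by rw [sum_const, smul_eq_mul, mul_comm]; rfl

lemma natCast_hammingNorm_eq_sum (v : ι → ZMod 2) : (hammingNorm v : ZMod 2) = ∑ i, v i := by
  have hv : ∀ i, v i = if v i ≠ 0 then 1 else 0 := fun i => by
    generalize v i = a; revert a; decide
  rw [sum_congr rfl fun i _ => hv i, sum_boole]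
  rfl

lemma even_hammingNorm_mulVec (A : Matrix ι κ (ZMod 2))
    (hA : ∀ j, Even (hammingNorm (A.col j))) (x : κ → ZMod 2) :
    Even (hammingNorm (A *ᵥ x)) := by
  rw [← ZMod.natCast_eq_zero_iff_even, natCast_hammingNorm_eq_sum]
  simp only [mulVec, dotProduct]
  rw [sum_comm]
  refine sum_eq_zero fun j _ => ?_
  have := natCast_hammingNorm_eq_sum (A.col j)
  rw [(ZMod.natCast_eq_zero_iff_even).2 (hA j)] at this
  simp only [col_apply] at this
  rw [← sum_mul, ← this, zero_mul]

end HammingWeight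

namespace Cm

variable {m : ℕ}

def incidence (m : ℕ) : Matrix (Fin m) (Coords m) (ZMod 2) := Matrix.of (Hmat m)

lemma mem_iff {x : Coords m → ZMod 2} : x ∈ Cm m ↔ incidence m *ᵥ x = 0 := Iff.rfl

lemma hammingNorm_indicator (T : Finset (Fin m)) :
    hammingNorm (fun i => if i ∈ T then (1 : ZMod 2) else 0) = #T := by
  simp [hammingNorm]

lemma incidence_col (e : Coords m) :
    (incidence m).col e = fun i => if i ∈ e.1 then 1 else 0 := rfl

lemma hammingNorm_incidence_col (e : Coords m) : hammingNorm ((incidence m).col e) = 2 := by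
  rw [incidence_col, hammingNorm_indicator, e.2]

lemma exists_incidence_mulVec_eq_indicator (k : ℕ) (T : Finset (Fin m)) (hT : #T = 2 * k) :
    ∃ y, incidence m *ᵥ y = (fun i => if i ∈ T then 1 else 0) ∧ hammingNorm y ≤ k := by
  classical
  induction k generalizing T with
  | zero => exact ⟨0, by ext; simp_all, by simp⟩
  | succ k ih =>
    obtain ⟨a, ha, b, hb, hab⟩ := one_lt_card.1 (by omega : 1 < #T)
    let e : Coords m := ⟨{a, b}, card_pair hab⟩
    have he : e.1 ⊆ T := by simp [e, insert_subset_iff, ha, hb]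
    obtain ⟨y, hy, hyk⟩ := ih (T \ e.1) (by rw [card_sdiff_of_subset he, e.2]; omega)
    refine ⟨y + Pi.single e 1, ?_, ?_⟩
    · ext i
      rw [mulVec_add, mulVec_single_one, hy, incidence_col]
      by_cases hi : i ∈ e.1
      · simp [hi, he hi]
      · simp [hi]
    · calc hammingNorm (y + Pi.single e 1) ≤ hammingNorm y + 1 :=
            (hammingNorm_add_le _ _).trans (Nat.add_le_add_left (hammingNorm_single_le _ _) _)
        _ ≤ k + 1 := by omega

lemma exists_incidence_mulVec_eq (s : Fin m → ZMod 2) (hs : Even (hammingNorm s)) :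
    ∃ y, incidence m *ᵥ y = s ∧ 2 * hammingNorm y ≤ hammingNorm s := by
  obtain ⟨k, hk⟩ := hs
  obtain ⟨y, hy, hyk⟩ :=
    exists_incidence_mulVec_eq_indicator k {i | s i ≠ 0} (hk.trans (two_mul k).symm)
  refine ⟨y, ?_, by omega⟩
  rw [hy]
  ext i
  simp only [mem_filter_univ]
  generalize s i = a
  revert a
  decide

lemma distToCode_eq (x : Coords m → ZMod 2) :
    distToCode (Cm m : Set (Coords m → ZMod 2)) x = hammingNorm (incidence m *ᵥ x) / 2 := by
  have hlower : ∀ c ∈ Cm m, hammingNorm (incidence m *ᵥ x) / 2 ≤ hammingDist x c := by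
    intro c hc
    have := hammingNorm_mulVec_le _ (fun e => (hammingNorm_incidence_col e).le) (x - c)
    rw [mulVec_sub, mem_iff.1 hc, sub_zero, ← hammingDist_eq_hammingNorm_sub] at this
    omega
  obtain ⟨y, hy, hyx⟩ := exists_incidence_mulVec_eq _ <| even_hammingNorm_mulVec _
    (fun e => by rw [hammingNorm_incidence_col]; exact even_two) x
  have hc : x - y ∈ Cm m := mem_iff.2 (by rw [mulVec_sub, hy, sub_self])
  refine IsLeast.csInf_eq ⟨⟨x - y, hc, ?_⟩, ?_⟩
  · have := hlower _ hc
    rw [hammingDist_eq_hammingNorm_sub, sub_sub_cancel] at this ⊢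
    omega
  · rintro d ⟨c, hc, rfl⟩
    exact hlower c hc

end Cm

theorem stmt_6_general (m : ℕ) : covRad (Cm m : Set (Coords m → ZMod 2)) = m / 2 := by
  refine IsGreatest.csSup_eq ⟨?_, ?_⟩
  · obtain ⟨T, -, hT⟩ := exists_subset_card_eq (s := (univ : Finset (Fin m)))
      (n := 2 * (m / 2)) (by rw [card_univ, Fintype.card_fin]; omega)
    obtain ⟨y, hy, -⟩ := Cm.exists_incidence_mulVec_eq_indicator (m / 2) T hT
    exact ⟨y, by rw [Cm.distToCode_eq, hy, Cm.hammingNorm_indicator, hT]; omega⟩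
  · rintro d ⟨x, rfl⟩
    have hweight := hammingNorm_le_card_fintype (x := Cm.incidence m *ᵥ x)
    rw [Fintype.card_fin] at hweight
    rw [Cm.distToCode_eq]
    omega

/-- the covering radius of C^(m) equals ⌊m/2⌋. -/
theorem stmt_6 (m : ℕ) (hm : 3 ≤ m) : covRad (Cm m : Set (Coords m → ZMod 2)) = m / 2 :=
  stmt_6_general m
end

section
/- Let C ⊆ F_2^n be a binary linear code with covering radius ρ such that C(ρ) = C + 1, and let A = C ∪ C(ρ). Then A is a linear code, and if C is completely transitive (the cosets of C fall into exactly ρ+1 orbits under the action of Aut(C), one for each weight class), then A is completely transitive: for any two cosets of A of the same weight s there exists a permutation in Aut(A) mapping one to the other. -/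
open Finset

/-!
Since `1 + C = C(ρ)`, the set `A = C ∪ (C + 1)` is the submodule `C ⊔ ⟨1⟩`, and
`d(x, A) = min (d(x, C), d(x + 1, C))`. Hence every coset `x + A` contains a coset `x + t + C`,
`t ∈ {0, 1}`, with `d(x + t, C) = d(x, A)`. A permutation fixes `1`, so `Aut(C) ⊆ Aut(A)`, and an
automorphism of `C` matching two such `C`-cosets of equal weight matches the `A`-cosets containing
them.
-/

section BinaryCodes

variable {ι : Type*}

lemma neg_binary (x : ι → ZMod 2) : -x = x :=
  funext fun i => ZMod.neg_eq_self_mod_two (x i)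

lemma add_add_cancel_binary (x t : ι → ZMod 2) : x + t + t = x :=
  funext fun i => CharTwo.add_cancel_right (x i) (t i)

lemma mem_image_add_right_iff {S : Set (ι → ZMod 2)} {u w : ι → ZMod 2} :
    w ∈ (fun v => v + u) '' S ↔ w + u ∈ S := by
  rw [Set.image_add_right, neg_binary, Set.mem_preimage]

lemma mem_cosetOf_iff {S : Set (ι → ZMod 2)} {x z : ι → ZMod 2} :
    z ∈ cosetOf S x ↔ x + z ∈ S := by
  rw [cosetOf, Set.image_add_left, neg_binary, Set.mem_preimage]

lemma cosetOf_add_of_mem (M : Submodule (ZMod 2) (ι → ZMod 2)) (y : ι → ZMod 2) {m : ι → ZMod 2}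
    (hm : m ∈ M) : cosetOf (M : Set (ι → ZMod 2)) (y + m) = cosetOf M y := by
  ext z
  rw [mem_cosetOf_iff, mem_cosetOf_iff, add_right_comm]
  exact add_mem_cancel_right hm

lemma cosetOf_eq_of_mem (M : Submodule (ZMod 2) (ι → ZMod 2)) {y z : ι → ZMod 2}
    (hz : z ∈ cosetOf (M : Set (ι → ZMod 2)) y) :
    cosetOf (M : Set (ι → ZMod 2)) z = cosetOf M y := by
  rw [mem_cosetOf_iff] at hz
  have hcancel : y + (y + z) = z := funext fun i => CharTwo.add_cancel_left (y i) (z i)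
  rw [← cosetOf_add_of_mem M y hz, hcancel]

lemma permAct_add (π : Equiv.Perm ι) (a b : ι → ZMod 2) :
    permAct π (a + b) = permAct π a + permAct π b := rfl

lemma image_permAct_of_mem_autSet {S : Set (ι → ZMod 2)} {π : Equiv.Perm ι}
    (hπ : π ∈ autSet S) : permAct π '' S = S := by
  have hinv : ∀ z, permAct π (permAct π.symm z) = z := fun z => funext fun i => by simp [permAct]
  ext z
  refine ⟨?_, fun hz => ⟨permAct π.symm z, (hπ _).mp ((hinv z).symm ▸ hz), hinv z⟩⟩
  rintro ⟨c, hc, rfl⟩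
  exact (hπ c).mpr hc

lemma image_permAct_cosetOf {S : Set (ι → ZMod 2)} {π : Equiv.Perm ι} (hπ : π ∈ autSet S)
    (y : ι → ZMod 2) : permAct π '' cosetOf S y = cosetOf S (permAct π y) := by
  have hcomm : (permAct π ∘ fun c => y + c) = (fun c => permAct π y + c) ∘ permAct π := rfl
  rw [cosetOf, ← Set.image_comp, hcomm, Set.image_comp, image_permAct_of_mem_autSet hπ, cosetOf]

lemma mem_autSet_union_image_add_right {S : Set (ι → ZMod 2)} {π : Equiv.Perm ι}
    {u : ι → ZMod 2} (hu : permAct π u = u) (hπ : π ∈ autSet S) :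
    π ∈ autSet (S ∪ (fun v => v + u) '' S) := by
  intro v
  have hshift : permAct π v + u = permAct π (v + u) := by rw [permAct_add, hu]
  rw [Set.mem_union, Set.mem_union, mem_image_add_right_iff, mem_image_add_right_iff, hshift,
    hπ, hπ]

lemma coe_sup_span_singleton (C : Submodule (ZMod 2) (ι → ZMod 2)) (u : ι → ZMod 2) :
    ((C ⊔ Submodule.span (ZMod 2) {u} : Submodule (ZMod 2) (ι → ZMod 2)) : Set (ι → ZMod 2)) =
      (C : Set (ι → ZMod 2)) ∪ (fun v => v + u) '' C := by
  ext v
  simp only [SetLike.mem_coe, Submodule.mem_sup, Submodule.mem_span_singleton, Set.mem_union,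
    mem_image_add_right_iff]
  constructor
  · rintro ⟨c, hc, _, ⟨a, rfl⟩, rfl⟩
    obtain rfl | rfl : a = 0 ∨ a = 1 := by decide +revert
    · left; simpa using hc
    · right; simpa [add_add_cancel_binary] using hc
  · rintro (hv | hv)
    · exact ⟨v, hv, 0, ⟨0, zero_smul _ _⟩, add_zero v⟩
    · exact ⟨v + u, hv, u, ⟨1, one_smul _ _⟩, add_add_cancel_binary v u⟩

lemma autSet_subset_autSet_sup_span_singleton (C : Submodule (ZMod 2) (ι → ZMod 2))
    {u : ι → ZMod 2} (hu : ∀ π, permAct π u = u) :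
    autSet (C : Set (ι → ZMod 2)) ⊆
      autSet ((C ⊔ Submodule.span (ZMod 2) {u} : Submodule (ZMod 2) (ι → ZMod 2)) :
        Set (ι → ZMod 2)) := fun π hπ => by
  rw [coe_sup_span_singleton]
  exact mem_autSet_union_image_add_right (hu π) hπ

variable [Fintype ι]

lemma hammingDist_add_right (x y t : ι → ZMod 2) :
    hammingDist (x + t) (y + t) = hammingDist x y := by
  rw [hammingDist_eq_hammingNorm, hammingDist_eq_hammingNorm]
  congr 1
  abel

lemma distToCode_union {S T : Set (ι → ZMod 2)} (hS : S.Nonempty) (hT : T.Nonempty)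
    (x : ι → ZMod 2) : distToCode (S ∪ T) x = min (distToCode S x) (distToCode T x) := by
  have hsplit : {d | ∃ c ∈ S ∪ T, hammingDist x c = d} =
      {d | ∃ c ∈ S, hammingDist x c = d} ∪ {d | ∃ c ∈ T, hammingDist x c = d} := by
    ext d; simp only [Set.mem_union, Set.mem_ofPred_eq, or_and_right, exists_or]
  rw [distToCode, hsplit]
  obtain ⟨s, hs⟩ := hS
  obtain ⟨t, ht⟩ := hT
  exact csInf_union (OrderBot.bddBelow _) ⟨_, s, hs, rfl⟩ (OrderBot.bddBelow _) ⟨_, t, ht, rfl⟩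

lemma distToCode_image_add_right (S : Set (ι → ZMod 2)) (u x : ι → ZMod 2) :
    distToCode ((fun v => v + u) '' S) x = distToCode S (x + u) := by
  have hshift : ∀ c, hammingDist x (c + u) = hammingDist (x + u) c := fun c => by
    rw [← hammingDist_add_right x (c + u) u, add_add_cancel_binary]
  simp only [distToCode, Set.exists_mem_image, hshift]

lemma exists_distToCode_sup_span_singleton (C : Submodule (ZMod 2) (ι → ZMod 2))
    (u x : ι → ZMod 2) :
    ∃ t ∈ C ⊔ Submodule.span (ZMod 2) {u},
      distToCode ((C ⊔ Submodule.span (ZMod 2) {u} : Submodule (ZMod 2) (ι → ZMod 2)) :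
        Set (ι → ZMod 2)) x = distToCode (C : Set (ι → ZMod 2)) (x + t) := by
  rw [coe_sup_span_singleton, distToCode_union ⟨0, C.zero_mem⟩
    ⟨_, Set.mem_image_of_mem _ C.zero_mem⟩, distToCode_image_add_right]
  rcases le_total (distToCode (C : Set (ι → ZMod 2)) x)
      (distToCode (C : Set (ι → ZMod 2)) (x + u)) with h | h
  · exact ⟨0, zero_mem _, by rw [min_eq_left h, add_zero]⟩
  · exact ⟨u, Submodule.mem_sup_right (Submodule.mem_span_singleton_self u), min_eq_right h⟩

theorem compTrans_of_le {C A : Submodule (ZMod 2) (ι → ZMod 2)} (hCA : C ≤ A)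
    (haut : autSet (C : Set (ι → ZMod 2)) ⊆ autSet (A : Set (ι → ZMod 2)))
    (hrep : ∀ x, ∃ t ∈ A, distToCode (A : Set (ι → ZMod 2)) x = distToCode (C : Set _) (x + t))
    (hC : compTrans (C : Set (ι → ZMod 2))) : compTrans (A : Set (ι → ZMod 2)) := by
  intro x x' hxx'
  obtain ⟨t, htA, ht⟩ := hrep x
  obtain ⟨t', ht'A, ht'⟩ := hrep x'
  obtain ⟨π, hπC, himg⟩ := hC (x + t) (x' + t') (by rw [← ht, ← ht', hxx'])
  have hπA := haut hπC
  have hπt : permAct π t ∈ A := (hπA t).mpr htA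
  have hmem : permAct π (x + t) ∈ cosetOf (C : Set (ι → ZMod 2)) (x' + t') := by
    rw [← himg]
    exact Set.mem_image_of_mem _ ⟨0, C.zero_mem, add_zero _⟩
  refine ⟨π, hπA, ?_⟩
  rw [image_permAct_cosetOf hπA, ← cosetOf_add_of_mem A _ hπt, ← permAct_add,
    cosetOf_eq_of_mem A (Set.image_mono hCA hmem), cosetOf_add_of_mem A x' ht'A]

end BinaryCodes

theorem stmt_10_general {n : ℕ} (Csub : Submodule (ZMod 2) (Fin n → ZMod 2)) (ρ : ℕ)
    (hna : Cset (Csub : Set (Fin n → ZMod 2)) ρ =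
      (fun v => v + (fun _ => 1)) '' (Csub : Set (Fin n → ZMod 2)))
    (hct : compTrans (Csub : Set (Fin n → ZMod 2))) :
    (∃ A : Submodule (ZMod 2) (Fin n → ZMod 2),
      (A : Set (Fin n → ZMod 2)) =
        (Csub : Set (Fin n → ZMod 2)) ∪ Cset (Csub : Set (Fin n → ZMod 2)) ρ) ∧
    compTrans ((Csub : Set (Fin n → ZMod 2)) ∪ Cset (Csub : Set (Fin n → ZMod 2)) ρ) := by
  have hA : ((Csub ⊔ Submodule.span (ZMod 2) {fun _ => 1} :
      Submodule (ZMod 2) (Fin n → ZMod 2)) : Set (Fin n → ZMod 2)) =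
        (Csub : Set (Fin n → ZMod 2)) ∪ Cset (Csub : Set (Fin n → ZMod 2)) ρ := by
    rw [hna, coe_sup_span_singleton]
  refine ⟨⟨_, hA⟩, ?_⟩
  rw [← hA]
  exact compTrans_of_le le_sup_left (autSet_subset_autSet_sup_span_singleton Csub fun _ => rfl)
    (exists_distToCode_sup_span_singleton Csub _) hct

/-- if C is completely transitive and C(ρ) = C + 1, then
A = C ∪ C(ρ) is a linear code which is completely transitive. -/
theorem stmt_10 {n : ℕ} (Csub : Submodule (ZMod 2) (Fin n → ZMod 2)) (ρ : ℕ)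
    (hρ : covRad (Csub : Set (Fin n → ZMod 2)) = ρ)
    (hna : Cset (Csub : Set (Fin n → ZMod 2)) ρ =
      (fun v => v + (fun _ => 1)) '' (Csub : Set (Fin n → ZMod 2)))
    (hct : compTrans (Csub : Set (Fin n → ZMod 2))) :
    (∃ A : Submodule (ZMod 2) (Fin n → ZMod 2),
      (A : Set (Fin n → ZMod 2)) =
        (Csub : Set (Fin n → ZMod 2)) ∪ Cset (Csub : Set (Fin n → ZMod 2)) ρ) ∧
    compTrans ((Csub : Set (Fin n → ZMod 2)) ∪ Cset (Csub : Set (Fin n → ZMod 2)) ρ) :=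
  stmt_10_general Csub ρ hna hct
end

section
/- Let C ⊆ F_2^n be a completely regular code with covering radius ρ and intersection numbers b_i, c_i. Then C(ρ) is completely regular with covering radius ρ and intersection numbers b_i^r = c_{ρ−i} and c_i^r = b_{ρ−i}. -/
/-!
Write `d x` for the distance from `x` to `C` and `ρ` for the covering radius. Walking down from a
vertex of `C(ρ)` produces, for every `i < ρ`, some vertex of `C(i)` with a neighbour in `C(i+1)`; so
`b i > 0`, and since `b i` counts these neighbours for *every* vertex of `C(i)`, each vertex below
level `ρ` can step up. Hence `C(ρ)` is reached from `x` in `ρ - d x` steps, and as `d` is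
1-Lipschitz, `d(x, C(ρ)) = ρ - d x`. So the distance classes of `C(ρ)` are those of `C` in
reverse order, which swaps the roles of `b` and `c`.
-/

open Finset

section Hamming

variable {ι : Type*} [Fintype ι] [DecidableEq ι] {β : Type*} [DecidableEq β]

theorem hammingDist_update_self {x : ι → β} {j : ι} {v : β} (h : x j ≠ v) :
    hammingDist x (Function.update x j v) = 1 := by
  rw [hammingDist, Finset.card_eq_one]
  refine ⟨j, Finset.ext fun i => ?_⟩
  by_cases hij : i = j <;> simp [Function.update_apply, hij, h]

theorem hammingDist_update_apply_lt {x y : ι → β} {j : ι} (h : x j ≠ y j) :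
    hammingDist (Function.update x j (y j)) y < hammingDist x y := by
  refine Finset.card_lt_card (Finset.ssubset_iff_of_subset ?_ |>.mpr ⟨j, by simp [h], by simp⟩)
  intro i
  by_cases hij : i = j <;> simp [Function.update_apply, hij]

end Hamming

section DistToCode

variable {ι : Type*} [Fintype ι] {C : Set (ι → ZMod 2)}

theorem distToCode_le_hammingDist {c : ι → ZMod 2} (hc : c ∈ C) (x : ι → ZMod 2) :
    distToCode C x ≤ hammingDist x c :=
  Nat.sInf_le ⟨c, hc, rfl⟩

theorem distToCode_eq_zero_of_mem {c : ι → ZMod 2} (hc : c ∈ C) : distToCode C c = 0 := by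
  simpa using distToCode_le_hammingDist hc c

theorem exists_hammingDist_eq_distToCode (hC : C.Nonempty) (x : ι → ZMod 2) :
    ∃ c ∈ C, hammingDist x c = distToCode C x :=
  Nat.sInf_mem (hC.image (hammingDist x))

theorem distToCode_le_add_hammingDist (hC : C.Nonempty) (x y : ι → ZMod 2) :
    distToCode C x ≤ distToCode C y + hammingDist x y := by
  obtain ⟨c, hc, hyc⟩ := exists_hammingDist_eq_distToCode hC y
  calc distToCode C x ≤ hammingDist x c := distToCode_le_hammingDist hc x
    _ ≤ hammingDist x y + hammingDist y c := hammingDist_triangle x y c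
    _ = distToCode C y + hammingDist x y := by omega

theorem exists_neighbor_distToCode_eq_sub_one [DecidableEq ι] (hC : C.Nonempty)
    {x : ι → ZMod 2} (hx : 0 < distToCode C x) :
    ∃ y, hammingDist x y = 1 ∧ distToCode C y = distToCode C x - 1 := by
  obtain ⟨c, hc, hxc⟩ := exists_hammingDist_eq_distToCode hC x
  obtain ⟨j, hj⟩ : ∃ j, x j ≠ c j :=
    Function.ne_iff.mp (hammingDist_pos.mp (hxc ▸ hx))
  have hxy := hammingDist_update_self hj
  have hcloser := (distToCode_le_hammingDist hc _).trans_lt (hammingDist_update_apply_lt hj)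
  have hlip := distToCode_le_add_hammingDist hC x (Function.update x j (c j))
  exact ⟨_, hxy, by omega⟩

theorem bddAbove_range_distToCode (hC : C.Nonempty) : BddAbove (Set.range (distToCode C)) := by
  obtain ⟨c, hc⟩ := hC
  exact ⟨Fintype.card ι, Set.forall_mem_range.mpr fun x =>
    (distToCode_le_hammingDist hc x).trans hammingDist_le_card_fintype⟩

theorem distToCode_le_covRad (hC : C.Nonempty) (x : ι → ZMod 2) : distToCode C x ≤ covRad C :=
  le_csSup (bddAbove_range_distToCode hC) ⟨x, rfl⟩

theorem exists_distToCode_eq_covRad (hC : C.Nonempty) : ∃ x, distToCode C x = covRad C :=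
  Nat.sSup_mem (Set.range_nonempty _) (bddAbove_range_distToCode hC)

theorem exists_distToCode_eq_of_le_covRad [DecidableEq ι] (hC : C.Nonempty) {i : ℕ}
    (hi : i ≤ covRad C) : ∃ x, distToCode C x = i := by
  obtain ⟨x, hx⟩ := exists_distToCode_eq_covRad hC
  obtain ⟨k, hk⟩ := Nat.exists_eq_add_of_le hi
  rw [hk] at hx
  clear hk hi
  induction k generalizing x with
  | zero => exact ⟨x, hx⟩
  | succ k ih =>
    obtain ⟨y, -, hy⟩ := exists_neighbor_distToCode_eq_sub_one hC (x := x) (by omega)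
    exact ih y (by omega)

theorem exists_neighbor_pair_of_lt_covRad [DecidableEq ι] (hC : C.Nonempty) {i : ℕ}
    (hi : i < covRad C) :
    ∃ x y, distToCode C x = i ∧ hammingDist x y = 1 ∧ distToCode C y = i + 1 := by
  obtain ⟨y, hy⟩ := exists_distToCode_eq_of_le_covRad hC hi
  obtain ⟨x, hxy, hx⟩ := exists_neighbor_distToCode_eq_sub_one hC (x := y) (by omega)
  exact ⟨x, y, by omega, hammingDist_comm x y ▸ hxy, hy⟩

end DistToCode

namespace compRegular

variable {ι : Type*} [Fintype ι] [DecidableEq ι] {C : Set (ι → ZMod 2)} {b c : ℕ → ℕ}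

theorem exists_neighbor_distToCode_eq_add_one (hC : C.Nonempty)
    (hcr : compRegular C (covRad C) b c) {x : ι → ZMod 2} (hx : distToCode C x < covRad C) :
    ∃ y, hammingDist x y = 1 ∧ distToCode C y = distToCode C x + 1 := by
  obtain ⟨x₀, y₀, hx₀, hxy₀, hy₀⟩ := exists_neighbor_pair_of_lt_covRad hC hx
  have hcard : Nat.card {y | hammingDist x₀ y = 1 ∧ y ∈ Cset C (distToCode C x + 1)} ≠ 0 :=
    Nat.card_ne_zero.mpr ⟨⟨y₀, hxy₀, hy₀⟩, inferInstance⟩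
  rw [hcr.2 _ hx x₀ hx₀, ← hcr.2 _ hx x rfl] at hcard
  obtain ⟨⟨y, hy⟩⟩ := (Nat.card_ne_zero.mp hcard).1
  exact ⟨y, hy⟩

theorem exists_mem_Cset_covRad_hammingDist_le (hC : C.Nonempty)
    (hcr : compRegular C (covRad C) b c) (x : ι → ZMod 2) :
    ∃ z ∈ Cset C (covRad C), hammingDist x z ≤ covRad C - distToCode C x := by
  suffices ∀ k x, distToCode C x + k = covRad C →
      ∃ z ∈ Cset C (covRad C), hammingDist x z ≤ k by
    exact this _ x (by have := distToCode_le_covRad hC x; omega)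
  intro k
  induction k with
  | zero => exact fun x hx => ⟨x, hx, by simp⟩
  | succ k ih =>
    intro x hx
    obtain ⟨y, hxy, hy⟩ := hcr.exists_neighbor_distToCode_eq_add_one hC (x := x) (by omega)
    obtain ⟨z, hz, hyz⟩ := ih y (by omega)
    exact ⟨z, hz, (hammingDist_triangle x y z).trans (by omega)⟩

theorem distToCode_Cset_covRad (hC : C.Nonempty) (hcr : compRegular C (covRad C) b c)
    (x : ι → ZMod 2) : distToCode (Cset C (covRad C)) x = covRad C - distToCode C x := by
  obtain ⟨z, hz, hxz⟩ := hcr.exists_mem_Cset_covRad_hammingDist_le hC x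
  refine le_antisymm ((distToCode_le_hammingDist hz x).trans hxz) ?_
  obtain ⟨w, hw, hxw⟩ := exists_hammingDist_eq_distToCode ⟨z, hz⟩ x
  have hlip := distToCode_le_add_hammingDist hC w x
  rw [hammingDist_comm, hxw] at hlip
  have hw' : distToCode C w = covRad C := hw
  omega

theorem Cset_Cset_covRad (hC : C.Nonempty) (hcr : compRegular C (covRad C) b c) {j : ℕ}
    (hj : j ≤ covRad C) : Cset (Cset C (covRad C)) j = Cset C (covRad C - j) := by
  ext x
  change distToCode (Cset C (covRad C)) x = j ↔ distToCode C x = covRad C - j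
  have := distToCode_le_covRad hC x
  rw [hcr.distToCode_Cset_covRad hC]
  omega

theorem covRad_Cset_covRad (hC : C.Nonempty) (hcr : compRegular C (covRad C) b c) :
    covRad (Cset C (covRad C)) = covRad C := by
  obtain ⟨c₀, hc₀⟩ := hC
  obtain ⟨x, hx⟩ := exists_distToCode_eq_covRad ⟨c₀, hc₀⟩
  have hdist := hcr.distToCode_Cset_covRad ⟨c₀, hc₀⟩
  refine le_antisymm (csSup_le (Set.range_nonempty _) ?_) ?_
  · exact Set.forall_mem_range.mpr fun y => by rw [hdist]; omega
  · refine le_csSup (bddAbove_range_distToCode ⟨x, hx⟩) ⟨c₀, ?_⟩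
    rw [hdist, distToCode_eq_zero_of_mem hc₀, Nat.sub_zero]

theorem Cset_covRad (hC : C.Nonempty) (hcr : compRegular C (covRad C) b c) :
    compRegular (Cset C (covRad C)) (covRad C)
      (fun i => c (covRad C - i)) (fun i => b (covRad C - i)) := by
  constructor
  · intro i hi₁ hi x hx
    rw [hcr.Cset_Cset_covRad hC hi] at hx
    rw [hcr.Cset_Cset_covRad hC (by omega), show covRad C - (i - 1) = covRad C - i + 1 by omega]
    exact hcr.2 _ (by omega) x hx
  · intro i hi x hx
    rw [hcr.Cset_Cset_covRad hC hi.le] at hx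
    rw [hcr.Cset_Cset_covRad hC hi, show covRad C - (i + 1) = covRad C - i - 1 by omega]
    exact hcr.1 _ (by omega) (by omega) x hx

end compRegular

/-- if C is completely regular with covering radius ρ and intersection
numbers b_i, c_i, then C(ρ) is completely regular with covering radius ρ and the
inverse intersection array. -/
theorem stmt_11 {n : ℕ} (Cc : Set (Fin n → ZMod 2)) (hne : Cc.Nonempty)
    (ρ : ℕ) (b c : ℕ → ℕ)
    (hρ : covRad Cc = ρ) (hcr : compRegular Cc ρ b c) :
    covRad (Cset Cc ρ) = ρ ∧
    compRegular (Cset Cc ρ) ρ (fun i => c (ρ - i)) (fun i => b (ρ - i)) := by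
  subst hρ
  exact ⟨hcr.covRad_Cset_covRad hne, hcr.Cset_covRad hne⟩
end

section
/- For even m ≥ 6 with m ≡ 0 (mod 4), set ρ = m/4. The completely regular code C^[m] has intersection numbers b_i = C(m−2i, 2) and c_i = C(2i, 2) for i = 0, 1, …, ρ−1, and c_ρ = 2·C(2ρ, 2). -/
/-!
Everything is read off the syndrome. Let `S(x) ⊆ {1,…,m}` be the set of rows of `H_m` in which
`x` has odd parity. Each column of `H_m` has weight two, so `|S(x)|` is even and flipping the
coordinate `c = {u, v}` replaces `S(x)` by `S(x) ∆ c`. Pairing up the points of a set `T` gives a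
word of weight `|T| / 2` with syndrome `T`, hence the coset `{z | S(z) = T}` is at distance
`|S(x) ∆ T| / 2` from `x`. The codes `C^(m)` and `C^(m) + 1` are the cosets over `∅` and over
`{1,…,m}`, so `x` is at distance `min (t / 2) ((m - t) / 2)` from `C^[m]`, where `t = |S(x)|`.
A neighbour `x + e_c` has syndrome weight `t + 2 - 2 |c ∩ S(x)|`: going one level down or up means
choosing `c` inside `S(x)` (`C(t, 2)` ways) or outside it (`C(m - t, 2)` ways), and at the middle
level `t = m / 2` both choices go down, which doubles `c_ρ`.
-/

open Finset

open scoped symmDiff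

section Hamming

variable {ι : Type*} [Fintype ι]

theorem hammingDist_self_add_right {β : ι → Type*} [∀ i, AddGroup (β i)]
    [∀ i, DecidableEq (β i)] (x y : ∀ i, β i) : hammingDist x (x + y) = hammingNorm y := by
  rw [hammingDist_eq_hammingNorm, neg_add_cancel_left]

theorem hammingDist_eq_hammingNorm_add (x y : ι → ZMod 2) :
    hammingDist x y = hammingNorm (x + y) := by
  rw [hammingDist_eq_hammingNorm, ZModModule.neg_eq_self]

variable [DecidableEq ι]

theorem hammingNorm_single_one (c : ι) : hammingNorm (Pi.single c 1 : ι → ZMod 2) = 1 := by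
  rw [hammingNorm, card_eq_one]
  exact ⟨c, by ext d; by_cases h : d = c <;> simp [h]⟩

theorem hammingNorm_eq_one_iff (v : ι → ZMod 2) :
    hammingNorm v = 1 ↔ ∃ c, v = Pi.single c 1 := by
  refine ⟨fun h => ?_, fun ⟨c, hc⟩ => hc ▸ hammingNorm_single_one c⟩
  obtain ⟨c, hc⟩ := card_eq_one.1 h
  refine ⟨c, funext fun d => ?_⟩
  have hd : v d ≠ 0 ↔ d = c := by simpa using congrArg (d ∈ ·) hc
  by_cases h : d = c
  · subst h
    rw [Pi.single_eq_same]
    have h1 := hd.2 rfl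
    generalize v d = a at h1
    revert a; decide
  · simpa [h] using hd

theorem natCard_neighbors_eq_ncard (x : ι → ZMod 2) (S : Set (ι → ZMod 2)) :
    Nat.card {y | hammingDist x y = 1 ∧ y ∈ S} = {c : ι | x + Pi.single c 1 ∈ S}.ncard := by
  have hinj : Function.Injective fun c : ι => x + Pi.single c 1 := fun c d h => by
    by_contra hcd
    simpa [Pi.single_eq_of_ne hcd] using congrArg (· c) (add_left_cancel h)
  have himage : {y | hammingDist x y = 1 ∧ y ∈ S} =
      (x + Pi.single · 1) '' {c | x + Pi.single c 1 ∈ S} := by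
    ext y
    simp only [Set.mem_ofPred_eq, Set.mem_image]
    constructor
    · rintro ⟨h1, hy⟩
      obtain ⟨c, hc⟩ := (hammingNorm_eq_one_iff _).1 (hammingDist_eq_hammingNorm_add x y ▸ h1)
      have : y = x + Pi.single c 1 := by rw [← hc, ← add_assoc, ZModModule.add_self, zero_add]
      exact ⟨c, this ▸ hy, this.symm⟩
    · rintro ⟨c, hc, rfl⟩
      exact ⟨by rw [hammingDist_self_add_right, hammingNorm_single_one], hc⟩
  rw [himage, Nat.card_image_of_injective hinj, Nat.card_coe_set_eq]

end Hamming

section CodeDistance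

variable {ι : Type*} [Fintype ι]

theorem distToCode_eq_of_mem_of_forall_le {C : Set (ι → ZMod 2)} {x : ι → ZMod 2} {d : ℕ}
    (hmem : ∃ c ∈ C, hammingDist x c = d) (hle : ∀ c ∈ C, d ≤ hammingDist x c) :
    distToCode C x = d :=
  IsLeast.csInf_eq ⟨hmem, by rintro _ ⟨c, hc, rfl⟩; exact hle c hc⟩

theorem distToCode_union_s14 {C D : Set (ι → ZMod 2)} (hC : C.Nonempty) (hD : D.Nonempty)
    (x : ι → ZMod 2) : distToCode (C ∪ D) x = min (distToCode C x) (distToCode D x) := by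
  change sInf (hammingDist x '' (C ∪ D)) =
    min (sInf (hammingDist x '' C)) (sInf (hammingDist x '' D))
  rw [Set.image_union,
    csInf_union (OrderBot.bddBelow _) (hC.image _) (OrderBot.bddBelow _) (hD.image _)]

end CodeDistance

theorem Finset.card_symmDiff_add_two_mul_card_inter {α : Type*} [DecidableEq α]
    (s t : Finset α) :
    #(s ∆ t) + 2 * #(s ∩ t) = #s + #t := by
  rw [symmDiff_def, sup_eq_union, card_union_of_disjoint disjoint_sdiff_sdiff]
  have hs := card_sdiff_add_card_inter s t
  have ht := card_sdiff_add_card_inter t s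
  rw [inter_comm] at ht
  omega

namespace Cm

variable {m : ℕ}

noncomputable def syndrome : (Coords m → ZMod 2) →ₗ[ZMod 2] Fin m → ZMod 2 :=
  Matrix.mulVecLin (Matrix.of fun i c => Hmat m i c)

noncomputable def syndromeSupport (x : Coords m → ZMod 2) : Finset (Fin m) :=
  {i | syndrome x i ≠ 0}

theorem syndrome_apply (x : Coords m → ZMod 2) (i : Fin m) :
    syndrome x i = ∑ c, Hmat m i c * x c := rfl

theorem syndromeSupport_eq_empty_iff {x : Coords m → ZMod 2} :
    syndromeSupport x = ∅ ↔ x ∈ Cm m := by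
  rw [syndromeSupport, filter_eq_empty_iff, Cm, LinearMap.mem_ker, funext_iff]
  simp [syndrome]

theorem syndromeSupport_add (x y : Coords m → ZMod 2) :
    syndromeSupport (x + y) = syndromeSupport x ∆ syndromeSupport y := by
  ext i
  simp only [syndromeSupport, mem_symmDiff, mem_filter, mem_univ, true_and, map_add, Pi.add_apply]
  generalize syndrome x i = a
  generalize syndrome y i = b
  revert a b
  decide

theorem syndromeSupport_single (c : Coords m) : syndromeSupport (Pi.single c 1) = c.1 := by
  ext i
  simp [syndromeSupport, syndrome, Hmat]

theorem syndromeSupport_subset_biUnion (x : Coords m → ZMod 2) :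
    syndromeSupport x ⊆ (univ.filter fun c => x c ≠ 0).biUnion Subtype.val := by
  intro i hi
  by_contra hnot
  simp only [mem_biUnion, mem_filter, mem_univ, true_and, not_exists, not_and] at hnot
  refine (mem_filter.1 hi).2 ?_
  rw [syndrome_apply]
  refine sum_eq_zero fun c _ => ?_
  by_cases hc : x c = 0
  · rw [hc, mul_zero]
  · rw [Hmat, if_neg (hnot c hc), zero_mul]

theorem card_syndromeSupport_le_two_mul_hammingNorm (x : Coords m → ZMod 2) :
    #(syndromeSupport x) ≤ 2 * hammingNorm x :=
  calc #(syndromeSupport x) ≤ #((univ.filter fun c => x c ≠ 0).biUnion Subtype.val) :=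
        card_le_card (syndromeSupport_subset_biUnion x)
    _ ≤ ∑ c ∈ univ.filter (fun c => x c ≠ 0), #c.1 := card_biUnion_le
    _ = 2 * hammingNorm x := by
        rw [sum_congr rfl fun c _ => c.2, sum_const, smul_eq_mul, mul_comm, hammingNorm]

theorem even_card_syndromeSupport (x : Coords m → ZMod 2) : Even #(syndromeSupport x) := by
  have hcol : ∀ c : Coords m, ∑ i, Hmat m i c = 0 := fun c => by
    simp [Hmat, sum_ite_mem, c.2]
    rfl
  have hsum : ∑ i, syndrome x i = 0 := by
    simp only [syndrome_apply]
    rw [sum_comm]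
    simp [← sum_mul, hcol]
  have hbool : ∀ i, syndrome x i = if syndrome x i ≠ 0 then 1 else 0 := fun i => by
    generalize syndrome x i = a
    revert a
    decide
  rw [← ZMod.natCast_eq_zero_iff_even, syndromeSupport, natCast_card_filter]
  calc _ = ∑ i, syndrome x i := sum_congr rfl fun i _ => (hbool i).symm
    _ = 0 := hsum

theorem exists_syndromeSupport_eq (T : Finset (Fin m)) (hT : Even #T) :
    ∃ y, syndromeSupport y = T ∧ hammingNorm y ≤ #T / 2 := by
  obtain ⟨n, hn⟩ := hT
  induction n generalizing T with
  | zero =>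
    refine ⟨0, ?_, by simp⟩
    rw [card_eq_zero.1 (by omega : #T = 0), syndromeSupport_eq_empty_iff]
    exact zero_mem _
  | succ n ih =>
    obtain ⟨u, hu, v, hv, huv⟩ := one_lt_card.1 (by omega : 1 < #T)
    let c : Coords m := ⟨{u, v}, card_pair huv⟩
    have hcT : c.1 ⊆ T := insert_subset hu (singleton_subset_iff.2 hv)
    obtain ⟨y, hy, hwt⟩ := ih (T \ c.1) (by rw [card_sdiff_of_subset hcT, c.2]; omega)
    refine ⟨y + Pi.single c 1, ?_, ?_⟩
    · rw [syndromeSupport_add, hy, syndromeSupport_single,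
        disjoint_sdiff_self_left.symmDiff_eq_sup, sup_eq_union, sdiff_union_of_subset hcT]
    · have := hammingDist_triangle 0 y (y + Pi.single c 1)
      rw [hammingDist_zero_left, hammingDist_self_add_right,
        hammingNorm_single_one] at this
      rw [card_sdiff_of_subset hcT, c.2] at hwt
      omega

theorem distToCode_setOf_syndromeSupport_eq (T : Finset (Fin m)) (hT : Even #T)
    (x : Coords m → ZMod 2) :
    distToCode {z | syndromeSupport z = T} x = #(syndromeSupport x ∆ T) / 2 := by
  have heven : Even #(syndromeSupport x ∆ T) := by
    have := card_symmDiff_add_two_mul_card_inter (syndromeSupport x) T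
    have hx := even_card_syndromeSupport x
    rw [Nat.even_iff] at *
    omega
  obtain ⟨y, hy, hwt⟩ := exists_syndromeSupport_eq _ heven
  have hlow := hy ▸ card_syndromeSupport_le_two_mul_hammingNorm y
  refine distToCode_eq_of_mem_of_forall_le ⟨x + y, ?_, ?_⟩ fun z hz => ?_
  · change syndromeSupport (x + y) = T
    rw [syndromeSupport_add, hy, symmDiff_symmDiff_cancel_left]
  · rw [hammingDist_self_add_right]
    omega
  · have := card_syndromeSupport_le_two_mul_hammingNorm (x + z)
    rw [syndromeSupport_add, show syndromeSupport z = T from hz] at this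
    rw [hammingDist_eq_hammingNorm_add]
    omega

theorem card_syndromeSupport_le (x : Coords m → ZMod 2) : #(syndromeSupport x) ≤ m := by
  simpa using card_le_univ (syndromeSupport x)

theorem coe_eq_setOf_syndromeSupport_eq_empty :
    (Cm m : Set (Coords m → ZMod 2)) = {z | syndromeSupport z = ∅} :=
  Set.ext fun _ => syndromeSupport_eq_empty_iff.symm

theorem Cset_half_eq_setOf_syndromeSupport_eq_univ (hm : Even m) :
    Cset (Cm m : Set (Coords m → ZMod 2)) (m / 2) = {z | syndromeSupport z = univ} := by
  ext z
  change distToCode _ z = m / 2 ↔ _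
  rw [coe_eq_setOf_syndromeSupport_eq_empty, distToCode_setOf_syndromeSupport_eq _ (by simp),
    ← bot_eq_empty, symmDiff_bot]
  change _ ↔ syndromeSupport z = univ
  rw [← card_eq_iff_eq_univ, Fintype.card_fin]
  have := card_syndromeSupport_le z
  have := even_card_syndromeSupport z
  rw [Nat.even_iff] at *
  omega

theorem card_filter_card_inter_eq_two (T : Finset (Fin m)) :
    #{c : Coords m | #(c.1 ∩ T) = 2} = (#T).choose 2 := by
  have : ({c | #(c.1 ∩ T) = 2} : Finset (Coords m)) = (powersetCard 2 T).subtype (#· = 2) := by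
    ext ⟨s, hs⟩
    simp only [mem_filter, mem_univ, true_and, mem_subtype, mem_powersetCard, hs, and_true]
    rw [← hs]
    exact ⟨fun h => inter_eq_left.1 (eq_of_subset_of_card_le inter_subset_left h.ge),
      fun h => by rw [inter_eq_left.2 h]⟩
  rw [this, card_subtype, filter_true_of_mem fun s hs => (mem_powersetCard.1 hs).2,
    card_powersetCard]

theorem card_filter_card_inter_eq_zero (T : Finset (Fin m)) :
    #{c : Coords m | #(c.1 ∩ T) = 0} = (m - #T).choose 2 := by
  have hsplit (c : Coords m) : #(c.1 ∩ T) + #(c.1 ∩ Tᶜ) = 2 := by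
    rw [← sdiff_eq_inter_compl, card_inter_add_card_sdiff, c.2]
  rw [filter_congr fun c _ => show #(c.1 ∩ T) = 0 ↔ #(c.1 ∩ Tᶜ) = 2 by grind,
    card_filter_card_inter_eq_two, card_compl, Fintype.card_fin]

theorem card_filter_card_inter (T : Finset (Fin m)) (P : ℕ → Prop) [DecidablePred P]
    (h1 : ¬P 1) :
    #{c : Coords m | P #(c.1 ∩ T)} =
      (if P 2 then (#T).choose 2 else 0) + (if P 0 then (m - #T).choose 2 else 0) := by
  have hsplit : ({c | P #(c.1 ∩ T)} : Finset (Coords m)) =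
      univ.filter (fun c => P 2 ∧ #(c.1 ∩ T) = 2) ∪
        univ.filter fun c => P 0 ∧ #(c.1 ∩ T) = 0 := by
    ext ⟨s, hs⟩
    have : #(s ∩ T) ≤ 2 := hs ▸ card_le_card inter_subset_left
    simp only [mem_filter, mem_univ, true_and, mem_union]
    interval_cases h : #(s ∩ T) <;> simp [h1]
  rw [hsplit, card_union_of_disjoint (disjoint_filter.2 fun c _ h h' => by omega),
    ← card_filter_card_inter_eq_two, ← card_filter_card_inter_eq_zero]
  split_ifs <;> simp [*]

end Cm

/-- The code `C^[m] = C^(m) ∪ (C^(m) + 1)`: for even `m` the all-one word has full syndrome, so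
`C^(m) + 1` is the set of words at distance `m / 2` from `C^(m)`. -/
noncomputable def CmUnion (m : ℕ) : Set (Coords m → ZMod 2) :=
  (Cm m : Set (Coords m → ZMod 2)) ∪ Cset (Cm m : Set (Coords m → ZMod 2)) (m / 2)

namespace CmUnion

open Cm

variable {m : ℕ}

def distOfSyndromeCard (m t : ℕ) : ℕ := min (t / 2) ((m - t) / 2)

theorem distToCode_eq (hm : Even m) (x : Coords m → ZMod 2) :
    distToCode (CmUnion m) x = distOfSyndromeCard m #(syndromeSupport x) := by
  have hne : ({z | syndromeSupport z = univ} : Set (Coords m → ZMod 2)).Nonempty :=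
    (exists_syndromeSupport_eq univ (by simpa using hm)).imp fun _ h => h.1
  rw [CmUnion, Cset_half_eq_setOf_syndromeSupport_eq_univ hm,
    coe_eq_setOf_syndromeSupport_eq_empty,
    distToCode_union_s14 ⟨0, syndromeSupport_eq_empty_iff.2 (zero_mem _)⟩ hne,
    distToCode_setOf_syndromeSupport_eq _ (by simp),
    distToCode_setOf_syndromeSupport_eq _ (by simpa using hm), ← bot_eq_empty, symmDiff_bot,
    ← top_eq_univ, symmDiff_top, hnot_eq_compl, card_compl, Fintype.card_fin, distOfSyndromeCard]

theorem card_neighbors_eq (hm : Even m) (x : Coords m → ZMod 2) {j : ℕ}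
    (hj : distOfSyndromeCard m #(syndromeSupport x) ≠ j) :
    Nat.card {y | hammingDist x y = 1 ∧ y ∈ Cset (CmUnion m) j} =
      (if distOfSyndromeCard m (#(syndromeSupport x) - 2) = j
        then (#(syndromeSupport x)).choose 2 else 0) +
      (if distOfSyndromeCard m (#(syndromeSupport x) + 2) = j
        then (m - #(syndromeSupport x)).choose 2 else 0) := by
  set T := syndromeSupport x
  have hmem (c : Coords m) : x + Pi.single c 1 ∈ Cset (CmUnion m) j ↔
      distOfSyndromeCard m (#T + 2 - 2 * #(c.1 ∩ T)) = j := by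
    have := card_symmDiff_add_two_mul_card_inter T c.1
    rw [inter_comm, c.2] at this
    change distToCode _ _ = j ↔ _
    rw [distToCode_eq hm, syndromeSupport_add, syndromeSupport_single,
      show #(T ∆ c.1) = #T + 2 - 2 * #(c.1 ∩ T) by omega]
  simp only [natCard_neighbors_eq_ncard, hmem]
  rw [Set.ncard_eq_toFinset_card', Set.toFinset_ofPred,
    card_filter_card_inter T (fun k => distOfSyndromeCard m (#T + 2 - 2 * k) = j)
      (by simpa using hj),
    show #T + 2 - 2 * 2 = #T - 2 by omega, show #T + 2 - 2 * 0 = #T + 2 by omega]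

theorem card_syndromeSupport_of_mem_Cset (hm : Even m) {x : Coords m → ZMod 2} {i : ℕ}
    (hx : x ∈ Cset (CmUnion m) i) :
    #(syndromeSupport x) = 2 * i ∨ #(syndromeSupport x) = m - 2 * i := by
  have hd : distOfSyndromeCard m #(syndromeSupport x) = i := (distToCode_eq hm x).symm.trans hx
  have ht := even_card_syndromeSupport x
  have := card_syndromeSupport_le x
  rw [distOfSyndromeCard] at hd
  rw [Nat.even_iff] at ht hm
  omega

theorem card_neighbors_sub_one_of_lt (hm : Even m) {x : Coords m → ZMod 2} {i : ℕ}
    (hi : 1 ≤ i) (him : 4 * i < m) (hx : x ∈ Cset (CmUnion m) i) :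
    Nat.card {y | hammingDist x y = 1 ∧ y ∈ Cset (CmUnion m) (i - 1)} = (2 * i).choose 2 := by
  have hd : distOfSyndromeCard m #(syndromeSupport x) = i := (distToCode_eq hm x).symm.trans hx
  have := Nat.even_iff.1 hm
  rw [card_neighbors_eq hm x (by omega)]
  unfold distOfSyndromeCard at hd ⊢
  rcases card_syndromeSupport_of_mem_Cset hm hx with ht | ht <;> rw [ht] at hd ⊢
  · rw [if_pos (by omega), if_neg (by omega), add_zero]
  · rw [if_neg (by omega), if_pos (by omega), zero_add, show m - (m - 2 * i) = 2 * i by omega]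

theorem card_neighbors_sub_one_of_eq {x : Coords m → ZMod 2} {i : ℕ} (hi : 1 ≤ i)
    (hm : m = 4 * i) (hx : x ∈ Cset (CmUnion m) i) :
    Nat.card {y | hammingDist x y = 1 ∧ y ∈ Cset (CmUnion m) (i - 1)} =
      2 * (2 * i).choose 2 := by
  have hm2 : Even m := ⟨2 * i, by omega⟩
  have hd : distOfSyndromeCard m #(syndromeSupport x) = i := (distToCode_eq hm2 x).symm.trans hx
  rw [card_neighbors_eq hm2 x (by omega)]
  unfold distOfSyndromeCard at hd ⊢
  have ht : #(syndromeSupport x) = 2 * i := by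
    have := card_syndromeSupport_of_mem_Cset hm2 hx
    omega
  rw [ht, if_pos (by omega), if_pos (by omega), show m - 2 * i = 2 * i by omega]
  exact (two_mul _).symm

theorem card_neighbors_add_one (hm : Even m) {x : Coords m → ZMod 2} {i : ℕ}
    (him : 4 * (i + 1) ≤ m) (hx : x ∈ Cset (CmUnion m) i) :
    Nat.card {y | hammingDist x y = 1 ∧ y ∈ Cset (CmUnion m) (i + 1)} =
      (m - 2 * i).choose 2 := by
  have hd : distOfSyndromeCard m #(syndromeSupport x) = i := (distToCode_eq hm x).symm.trans hx
  have := Nat.even_iff.1 hm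
  rw [card_neighbors_eq hm x (by omega)]
  unfold distOfSyndromeCard at hd ⊢
  rcases card_syndromeSupport_of_mem_Cset hm hx with ht | ht <;> rw [ht] at hd ⊢
  · rw [if_neg (by omega), if_pos (by omega), zero_add]
  · rw [if_pos (by omega), if_neg (by omega), add_zero]

end CmUnion

theorem stmt_14_general (m : ℕ) (h4 : m % 4 = 0) (ρ : ℕ) (hρ : ρ = m / 4) :
    compRegular
      ((Cm m : Set (Coords m → ZMod 2)) ∪ Cset (Cm m : Set (Coords m → ZMod 2)) (m / 2)) ρ
      (fun i => (m - 2 * i).choose 2)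
      (fun i => if i = ρ then 2 * ((2 * ρ).choose 2) else (2 * i).choose 2) := by
  have hm : Even m := Nat.even_iff.2 (by omega)
  refine ⟨fun i hi hiρ x hx => ?_,
    fun i hiρ x hx => CmUnion.card_neighbors_add_one hm (by omega) hx⟩
  beta_reduce
  split_ifs with h
  · subst h
    exact CmUnion.card_neighbors_sub_one_of_eq hi (by omega) hx
  · exact CmUnion.card_neighbors_sub_one_of_lt hm hi (by omega) hx

/-- for m ≡ 0 (mod 4), m ≥ 6, with ρ = m/4, the completely regular
code C^[m] has intersection numbers b_i = C(m-2i,2), c_i = C(2i,2) for i < ρ, and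
c_ρ = 2·C(2ρ,2). -/
theorem stmt_14 (m : ℕ) (hm : 6 ≤ m) (h4 : m % 4 = 0) (ρ : ℕ) (hρ : ρ = m / 4) :
    compRegular
      ((Cm m : Set (Coords m → ZMod 2)) ∪ Cset (Cm m : Set (Coords m → ZMod 2)) (m / 2)) ρ
      (fun i => (m - 2 * i).choose 2)
      (fun i => if i = ρ then 2 * ((2 * ρ).choose 2) else (2 * i).choose 2) :=
  stmt_14_general m h4 ρ hρ
end

section
/- For even m > 6, Aut(C^[m]) = Aut(C^(m)), where C^[m] is the span of C^(m) and the all-ones vector. -/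
open Finset

/-! Read the coordinates as the edges of `K_m` and a vector as an edge set: `C^(m)` consists of
the even subgraphs, and for even `m` the coset `C^(m) + 1` consists of the subgraphs in which every
vertex has odd degree. Such a subgraph touches all `m` vertices, so it has at least `m / 2 > 3`
edges. Hence an automorphism of `C^[m]` maps every triangle, a weight-3 word of `C^(m)`, into
`C^(m)`. Every even subgraph is the sum of the triangles `{z} ∪ e` over its edges `e` avoiding a
fixed vertex `z`, so the automorphism maps `C^(m)` into itself, and applying this to its inverse
as well shows that it preserves `C^(m)`. Conversely, every permutation fixes `1`. -/

section PermutationCodes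

variable {ι : Type*}

lemma permAct_permAct_inv (σ : Equiv.Perm ι) (v : ι → ZMod 2) :
    permAct σ (permAct σ⁻¹ v) = v := by
  funext i; simp [permAct]

lemma permAct_inv_permAct (σ : Equiv.Perm ι) (v : ι → ZMod 2) :
    permAct σ⁻¹ (permAct σ v) = v := by
  funext i; simp [permAct]

lemma inv_mem_autSet {C : Set (ι → ZMod 2)} {σ : Equiv.Perm ι} (hσ : σ ∈ autSet C) :
    σ⁻¹ ∈ autSet C := fun v => by
  rw [← hσ, permAct_permAct_inv]

lemma autSet_subset_autSet_of_mapsTo {C D : Set (ι → ZMod 2)}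
    (h : ∀ σ ∈ autSet D, Set.MapsTo (permAct σ) C C) : autSet D ⊆ autSet C := by
  intro σ hσ v
  refine ⟨fun hv => ?_, fun hv => h σ hσ hv⟩
  simpa only [permAct_inv_permAct] using h σ⁻¹ (inv_mem_autSet hσ) hv

lemma mapsTo_permAct_of_le_span {C : Submodule (ZMod 2) (ι → ZMod 2)} {S : Set (ι → ZMod 2)}
    (hC : C ≤ Submodule.span (ZMod 2) S) {σ : Equiv.Perm ι}
    (hS : Set.MapsTo (permAct σ) S C) : Set.MapsTo (permAct σ) C C := fun _ hv =>
  (Submodule.span_le (p := C.comap (LinearMap.funLeft (ZMod 2) (ZMod 2) σ))).2 hS (hC hv)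

lemma mem_image_add_iff {C : Set (ι → ZMod 2)} {a v : ι → ZMod 2} :
    v ∈ (fun w => w + a) '' C ↔ v + a ∈ C := by
  rw [Set.image_add_right, Set.mem_preimage, ZModModule.neg_eq_self]

lemma autSet_subset_autSet_union_image_add {C : Set (ι → ZMod 2)} {a : ι → ZMod 2}
    {σ : Equiv.Perm ι} (ha : permAct σ a = a) (hσ : σ ∈ autSet C) :
    σ ∈ autSet (C ∪ (fun w => w + a) '' C) := fun v => by
  have : permAct σ v + a = permAct σ (v + a) := by nth_rw 1 [← ha]; rfl
  simp only [Set.mem_union, mem_image_add_iff, this, hσ v, hσ (v + a)]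

lemma hammingNorm_permAct [Fintype ι] (σ : Equiv.Perm ι) (v : ι → ZMod 2) :
    hammingNorm (permAct σ v) = hammingNorm v :=
  Finset.card_equiv σ fun _ => by simp only [Finset.mem_filter_univ]; rfl

end PermutationCodes

namespace Cm

variable {m : ℕ}

def deg (v : Coords m → ZMod 2) (i : Fin m) : ZMod 2 :=
  ∑ c : Coords m with i ∈ c.1, v c

lemma mem_iff_forall_deg_eq_zero {v : Coords m → ZMod 2} : v ∈ Cm m ↔ ∀ i, deg v i = 0 := by
  simp [Cm, Matrix.mulVecLin, LinearMap.mem_ker, funext_iff, Matrix.mulVec, dotProduct,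
    Hmat, ite_mul, deg, Finset.sum_filter]

lemma deg_add (u w : Coords m → ZMod 2) (i : Fin m) : deg (u + w) i = deg u i + deg w i :=
  sum_add_distrib

def clique (T : Finset (Fin m)) : Coords m → ZMod 2 := fun c => if c.1 ⊆ T then 1 else 0

lemma clique_univ : clique (univ : Finset (Fin m)) = 1 := by
  funext c; simp [clique]

lemma card_filter_mem_subset {T : Finset (Fin m)} {i : Fin m} (hi : i ∈ T) :
    #{c : Coords m | i ∈ c.1 ∧ c.1 ⊆ T} = #T - 1 := by
  rw [← card_erase_of_mem hi]
  refine (card_bij (fun j hj => (⟨{i, j}, card_pair (ne_of_mem_erase hj).symm⟩ : Coords m))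
    (fun j hj => ?_) (fun j hj j' _ hjj' => ?_) (fun c hc => ?_)).symm
  · simp [insert_subset_iff, hi, mem_of_mem_erase hj]
  · have hpair : ({i, j} : Finset (Fin m)) = {i, j'} := congrArg Subtype.val hjj'
    have : j ∈ ({i, j'} : Finset (Fin m)) := hpair ▸ mem_insert_of_mem (mem_singleton_self j)
    simpa [ne_of_mem_erase hj] using this
  · obtain ⟨hic, hcT⟩ := (mem_filter.1 hc).2
    obtain ⟨j, hj⟩ := card_eq_one.1 (by rw [card_erase_of_mem hic, c.2] : #(c.1.erase i) = 1)
    have hjc : j ∈ c.1.erase i := hj ▸ mem_singleton_self j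
    refine ⟨j, mem_erase.2 ⟨ne_of_mem_erase hjc, hcT (mem_of_mem_erase hjc)⟩, Subtype.ext ?_⟩
    change insert i {j} = c.1
    rw [← hj, insert_erase hic]

lemma deg_clique (T : Finset (Fin m)) (i : Fin m) :
    deg (clique T) i = if i ∈ T then ((#T - 1 : ℕ) : ZMod 2) else 0 := by
  unfold deg clique
  rw [sum_boole, filter_filter]
  split_ifs with hi
  · rw [card_filter_mem_subset hi]
  · rw [filter_false_of_mem fun c _ h => hi (h.2 h.1), card_empty, Nat.cast_zero]

lemma clique_mem {T : Finset (Fin m)} (hT : Odd #T) : clique T ∈ Cm m :=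
  mem_iff_forall_deg_eq_zero.2 fun i => by
    rw [deg_clique]
    split_ifs
    · exact ZMod.natCast_eq_zero_iff_even.2 (Nat.Odd.sub_odd hT odd_one)
    · rfl

lemma deg_one (he : Even m) (i : Fin m) : deg 1 i = 1 := by
  rw [← clique_univ, deg_clique, if_pos (mem_univ i), card_univ, Fintype.card_fin]
  obtain ⟨k, hk⟩ := he
  exact ZMod.natCast_eq_one_iff_odd.2 ⟨k - 1, by have := i.pos; omega⟩

lemma hammingNorm_clique_le (T : Finset (Fin m)) : hammingNorm (clique T) ≤ (#T).choose 2 := by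
  rw [← card_powersetCard]
  refine card_le_card_of_injOn (fun c => c.1) (fun c hc => ?_) fun _ _ _ _ => Subtype.ext
  have hcT : c.1 ⊆ T := by
    by_contra h
    simp [clique, h] at hc
  exact mem_powersetCard.2 ⟨hcT, c.2⟩

lemma le_two_mul_hammingNorm (he : Even m) {v : Coords m → ZMod 2} (hv : v + 1 ∈ Cm m) :
    m ≤ 2 * hammingNorm v := by
  have hdeg : ∀ i, deg v i ≠ 0 := fun i h => by
    have := mem_iff_forall_deg_eq_zero.1 hv i
    rw [deg_add, h, deg_one he, zero_add] at this
    exact one_ne_zero this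
  have hcover : (univ : Finset (Fin m)) ⊆ ({c | v c ≠ 0} : Finset (Coords m)).biUnion (·.1) :=
    fun i _ => by
      obtain ⟨c, hc, hvc⟩ := exists_ne_zero_of_sum_ne_zero (hdeg i)
      exact mem_biUnion.2 ⟨c, mem_filter.2 ⟨mem_univ c, hvc⟩, (mem_filter.1 hc).2⟩
  calc m = #(univ : Finset (Fin m)) := by simp
    _ ≤ ∑ c : Coords m with v c ≠ 0, #c.1 := (card_le_card hcover).trans card_biUnion_le
    _ = 2 * hammingNorm v := by
      rw [sum_congr rfl fun c _ => c.2, sum_const, smul_eq_mul, mul_comm]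
      rfl

lemma eq_zero_of_forall_notMem {r : Coords m → ZMod 2} (hr : r ∈ Cm m) (z : Fin m)
    (h : ∀ f : Coords m, z ∉ f.1 → r f = 0) : r = 0 := by
  funext f
  by_cases hzf : z ∉ f.1
  · exact h f hzf
  rw [not_not] at hzf
  obtain ⟨w, hw⟩ := card_eq_one.1 (by rw [card_erase_of_mem hzf, f.2] : #(f.1.erase z) = 1)
  have hwf : w ∈ f.1 := mem_of_mem_erase (hw ▸ mem_singleton_self w)
  have hf : f.1 = {z, w} := by rw [← hw, insert_erase hzf]
  -- the only edge at `w` that may carry a nonzero entry is `f = {z, w}`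
  calc r f = deg r w := by
        refine (sum_eq_single_of_mem f (mem_filter.2 ⟨mem_univ f, hwf⟩) fun c hc hcf => ?_).symm
        refine h c fun hzc => hcf (Subtype.ext ?_).symm
        have hfc : f.1 ⊆ c.1 :=
          hf ▸ insert_subset hzc (singleton_subset_iff.2 (mem_filter.1 hc).2)
        exact eq_of_subset_of_card_le hfc (by rw [f.2, c.2])
    _ = 0 := mem_iff_forall_deg_eq_zero.1 hr w

lemma card_insert_eq_three {z : Fin m} {e : Coords m} (hz : z ∉ e.1) : #(insert z e.1) = 3 := by
  rw [card_insert_of_notMem hz, e.2]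

lemma sum_smul_clique_insert_apply (v : Coords m → ZMod 2) (z : Fin m) {f : Coords m}
    (hf : z ∉ f.1) : (∑ e : Coords m with z ∉ e.1, v e • clique (insert z e.1)) f = v f := by
  have hclique : ∀ e : Coords m, clique (insert z e.1) f = if e = f then 1 else 0 := fun e => by
    have hfe : f.1 ⊆ e.1 ↔ e = f :=
      ⟨fun hfe => (Subtype.ext (eq_of_subset_of_card_le hfe (by rw [f.2, e.2]))).symm,
        fun hef => hef ▸ subset_rfl⟩
    simp only [clique, subset_insert_iff_of_notMem hf, hfe]
  simp only [Finset.sum_apply, Pi.smul_apply, smul_eq_mul, hclique, mul_ite, mul_one, mul_zero,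
    sum_ite_eq', mem_filter, mem_univ, true_and, if_pos hf]

lemma eq_sum_smul_clique_insert {v : Coords m → ZMod 2} (hv : v ∈ Cm m) (z : Fin m) :
    v = ∑ e : Coords m with z ∉ e.1, v e • clique (insert z e.1) := by
  refine sub_eq_zero.1 (eq_zero_of_forall_notMem (sub_mem hv (sum_mem fun e he => ?_)) z
    fun f hf => by rw [Pi.sub_apply, sum_smul_clique_insert_apply v z hf, sub_self])
  have hcard := card_insert_eq_three (mem_filter.1 he).2
  exact Submodule.smul_mem _ _ (clique_mem (by rw [hcard]; decide))

lemma le_span_hammingNorm_le_three [NeZero m] :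
    Cm m ≤ Submodule.span (ZMod 2) {v | v ∈ Cm m ∧ hammingNorm v ≤ 3} := fun v hv => by
  rw [eq_sum_smul_clique_insert hv 0]
  refine sum_mem fun e he => Submodule.smul_mem _ _ (Submodule.subset_span ?_)
  have hcard := card_insert_eq_three (mem_filter.1 he).2
  exact ⟨clique_mem (by rw [hcard]; decide), (hammingNorm_clique_le _).trans (by rw [hcard]; rfl)⟩

end Cm

/-- for even m > 6, Aut(C^[m]) = Aut(C^(m)), where
C^[m] = C^(m) ∪ (C^(m) + 1). -/
theorem stmt_17 (m : ℕ) (hm : 6 < m) (he : Even m) :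
    autSet ((Cm m : Set (Coords m → ZMod 2)) ∪
        ((fun v => v + (fun _ => 1)) '' (Cm m : Set (Coords m → ZMod 2)))) =
      autSet (Cm m : Set (Coords m → ZMod 2)) := by
  have : NeZero m := ⟨by omega⟩
  refine (autSet_subset_autSet_of_mapsTo fun σ hσ => ?_).antisymm
    fun σ => autSet_subset_autSet_union_image_add rfl
  refine mapsTo_permAct_of_le_span Cm.le_span_hammingNorm_le_three fun t ⟨ht, hwt⟩ => ?_
  refine ((hσ t).2 (Or.inl ht)).resolve_right fun h => ?_
  have := Cm.le_two_mul_hammingNorm he (mem_image_add_iff.1 h)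
  rw [hammingNorm_permAct] at this
  omega
end
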